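/- With every irreducible identity φ(z_1,...,z_k) = ψ(z_{k+1},...,z_l) (φ, ψ ∈ Φ, all z_i immediate) one can associate a sequence x_1,...,x_l of individual and nullary function variables of sort ind, with x_i ≡ x_j iff z_i ≡ z_j, such that for every infinite Φ-structure A: A ⊨_inj φ(z_1,...,z_k) = ψ(z_{k+1},...,z_l) if and only if A ⊨_inj φ(x_1,...,x_k) = ψ(x_{k+1},...,x_l). -/

import Mathlib

namespace McCarthy

/-- Sorts: individual (`ind`) and Boolean (`bool`). -/
inductive Srt where
  | ind | bool
deriving DecidableEq

/-- A function variable is identified by its sort, arity and index. -/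
abbrev FV : Type := Srt × ℕ × ℕ

/-- Explicit terms over a vocabulary `Φ`. -/
inductive Term (Φ : Type) where
  | tt : Term Φ
  | ff : Term Φ
  | ivar : ℕ → Term Φ
  | fapp : FV → List (Term Φ) → Term Φ
  | prim : Φ → List (Term Φ) → Term Φ
  | cond : Srt → Term Φ → Term Φ → Term Φ → Term Φ

variable {Φ : Type}

def isIvar : Term Φ → Bool
  | .ivar _ => true
  | _ => false

/-- Immediate terms: individual variables, or function variables applied to
individual variables (nullary function variables included). -/
def isImmediate : Term Φ → Bool
  | .ivar _ => true
  | .fapp p args => (args.all isIvar) && (args.length == p.2.1)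
  | _ => false

/-- Irreducible terms: immediate terms, Boolean constants, or applications
with immediate arguments. -/
def isIrreducible : Term Φ → Bool
  | .tt => true
  | .ff => true
  | .ivar _ => true
  | .fapp p args => ((args.all isIvar) && (args.length == p.2.1)) || args.all isImmediate
  | .prim _ args => args.all isImmediate
  | .cond _ a b c => isImmediate a && isImmediate b && isImmediate c

/-- The sort of an immediate (or irreducible non-`prim`) term. -/
def immSort : Term Φ → Srt
  | .tt => .bool
  | .ff => .bool
  | .fapp p _ => p.1
  | .cond s _ _ _ => s
  | _ => .ind

mutual
/-- `sizeT E` counts the occurrences of non-immediate proper subterms of `E`. -/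
def sizeT : Term Φ → ℕ
  | .tt => 0
  | .ff => 0
  | .ivar _ => 0
  | .fapp _ args => sizeTL args
  | .prim _ args => sizeTL args
  | .cond _ a b c =>
      (sizeT a + (if isImmediate a then 0 else 1)) +
      (sizeT b + (if isImmediate b then 0 else 1)) +
      (sizeT c + (if isImmediate c then 0 else 1))

def sizeTL : List (Term Φ) → ℕ
  | [] => 0
  | t :: ts => (sizeT t + (if isImmediate t then 0 else 1)) + sizeTL ts
end

mutual
/-- Renaming of function variables. -/
def renameF (ρ : FV → FV) : Term Φ → Term Φ
  | .tt => .tt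
  | .ff => .ff
  | .ivar i => .ivar i
  | .fapp p args => .fapp (ρ p) (renameFL ρ args)
  | .prim f args => .prim f (renameFL ρ args)
  | .cond s a b c => .cond s (renameF ρ a) (renameF ρ b) (renameF ρ c)

def renameFL (ρ : FV → FV) : List (Term Φ) → List (Term Φ)
  | [] => []
  | t :: ts => renameF ρ t :: renameFL ρ ts
end

mutual
/-- Renaming of individual variables. -/
def renameV (σ : ℕ → ℕ) : Term Φ → Term Φ
  | .tt => .tt
  | .ff => .ff
  | .ivar i => .ivar (σ i)
  | .fapp p args => .fapp p (renameVL σ args)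
  | .prim f args => .prim f (renameVL σ args)
  | .cond s a b c => .cond s (renameV σ a) (renameV σ b) (renameV σ c)

def renameVL (σ : ℕ → ℕ) : List (Term Φ) → List (Term Φ)
  | [] => []
  | t :: ts => renameV σ t :: renameVL σ ts
end

mutual
/-- Does the function variable `q` occur in the term? -/
def occursF (q : FV) : Term Φ → Bool
  | .tt => false
  | .ff => false
  | .ivar _ => false
  | .fapp p args => (decide (p = q)) || occursFL q args
  | .prim _ args => occursFL q args
  | .cond _ a b c => occursF q a || occursF q b || occursF q c

def occursFL (q : FV) : List (Term Φ) → Bool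
  | [] => false
  | t :: ts => occursF q t || occursFL q ts
end


/-! ## Extended recursive programs -/

/-- A body equation `p(x⃗) = rhs`. -/
structure Eqn (Φ : Type) where
  p : FV
  xs : List ℕ
  rhs : Term Φ

/-- An extended recursive program `E₀(x⃗) where { p₁(x⃗₁) = E₁, …, p_K(x⃗_K) = E_K }`,
with the body represented as a multiset (set representation of the paper). -/
structure ExtProg (Φ : Type) where
  fvars : List ℕ
  head : Term Φ
  body : Multiset (Eqn Φ)

/-- The function variables bound by the body of a program. -/
def bodyPvars (E : ExtProg Φ) : Multiset FV := E.body.map Eqn.p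

/-- `q` is fresh for `E`: it is not a recursion variable of `E` and occurs nowhere in `E`. -/
def FreshIn (q : FV) (E : ExtProg Φ) : Prop :=
  occursF q E.head = false ∧ ∀ e ∈ E.body, e.p ≠ q ∧ occursF q e.rhs = false

/-- The argument list of an application term (the empty list otherwise). -/
def argsOf : Term Φ → List (Term Φ)
  | .fapp _ as => as
  | .prim _ as => as
  | .cond _ a b c => [a, b, c]
  | _ => []

/-- Replace the argument list of an application term. -/
def withArgs : Term Φ → List (Term Φ) → Term Φ
  | .fapp p _, as => .fapp p as
  | .prim f _, as => .prim f as
  | .cond s _ _ _, [a, b, c] => .cond s a b c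
  | t, _ => t

def isApp : Term Φ → Bool
  | .fapp _ _ => true
  | .prim _ _ => true
  | .cond _ _ _ _ => true
  | _ => false

/-- Labels `(p, j, q)` of arrow reductions. -/
abbrev Lbl : Type := FV × ℕ × FV

/-- The arrow-reduction relation `E(x⃗) →^{(p,j,q)} F(x⃗)` on extended programs:
either a non-immediate `j`-th argument of the (outermost application) right-hand side
of the body equation for `p` is split off into a new equation for the fresh variable `q`
(body case), or — when `p` is fresh, serving merely as a marker — the non-immediate
`j`-th argument of the head is split off (head case). -/
inductive Step : Lbl → ExtProg Φ → ExtProg Φ → Prop where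
  | body (p : FV) (j : ℕ) (q : FV) (E F : ExtProg Φ) (s : Multiset (Eqn Φ)) (e : Eqn Φ)
      (G : Term Φ)
      (hbody : E.body = s + {e}) (hp : e.p = p) (happ : isApp e.rhs = true)
      (hG : (argsOf e.rhs)[j]? = some G) (himm : isImmediate G = false)
      (hq : FreshIn q E) (har : q.2.1 = e.xs.length)
      (hF : F = ⟨E.fvars, E.head,
        s + {⟨p, e.xs, withArgs e.rhs ((argsOf e.rhs).set j (.fapp q (e.xs.map Term.ivar)))⟩,
             ⟨q, e.xs, G⟩}⟩) :
      Step (p, j, q) E F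
  | head (p : FV) (j : ℕ) (q : FV) (E F : ExtProg Φ) (G : Term Φ)
      (hp : FreshIn p E) (hq : FreshIn q E) (hpq : p ≠ q) (happ : isApp E.head = true)
      (hG : (argsOf E.head)[j]? = some G) (himm : isImmediate G = false)
      (har : q.2.1 = E.fvars.length)
      (hF : F = ⟨E.fvars,
        withArgs E.head ((argsOf E.head).set j (.fapp q (E.fvars.map Term.ivar))),
        E.body + {⟨q, E.fvars, G⟩}⟩) :
      Step (p, j, q) E F

/-- One-step reduction: arrow reduction for some label. -/
def Step1 (E F : ExtProg Φ) : Prop := ∃ l : Lbl, Step l E F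

/-- The `~_E` relation on function variables used in the Amalgamation Lemma:
`p ~_E p'` iff both are the same recursion variable of `E` (body case) or
neither is a recursion variable of `E` (head case). -/
def SameCase (E : ExtProg Φ) (p p' : FV) : Prop :=
  (p = p' ∧ p ∈ bodyPvars E) ∨ (p ∉ bodyPvars E ∧ p' ∉ bodyPvars E)

/-- Size of an extended program: total number of occurrences of non-immediate
proper subterms of its parts. -/
def sizeP (E : ExtProg Φ) : ℕ := sizeT E.head + (E.body.map (fun e => sizeT e.rhs)).sum

/-- An extended program is irreducible if all its parts are irreducible terms. -/
def IrrProg (E : ExtProg Φ) : Prop :=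
  isIrreducible E.head = true ∧ ∀ e ∈ E.body, isIrreducible e.rhs = true

/-! ## Congruence -/

/-- `ρ` preserves sorts and arities of function variables. -/
def SortArityPres (ρ : FV → FV) : Prop := ∀ v : FV, (ρ v).1 = v.1 ∧ (ρ v).2.1 = v.2.1

/-- One equation is obtained from another by renaming the (bound) individual
variables and applying a renaming `ρ` of the function variables. -/
def EqnCong (ρ : FV → FV) (e f : Eqn Φ) : Prop :=
  f.p = ρ e.p ∧ ∃ σ : ℕ → ℕ,
    (∀ a ∈ e.xs, ∀ b ∈ e.xs, σ a = σ b → a = b) ∧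
    f.xs = e.xs.map σ ∧ f.rhs = renameV σ (renameF ρ e.rhs)

/-- Congruence of extended programs: an alphabetic change of the bound individual
and function variables together with a permutation of the body equations
(the latter being automatic in the multiset representation). -/
def Congruent (E F : ExtProg Φ) : Prop :=
  ∃ ρ : FV → FV, Function.Bijective ρ ∧ SortArityPres ρ ∧
    (∀ p : FV, p ∉ bodyPvars E → ρ p = p) ∧
    F.fvars = E.fvars ∧ F.head = renameF ρ E.head ∧
    Multiset.Rel (EqnCong ρ) E.body F.body

/-- Full reduction: a (possibly empty) chain of one-step reductions followed by a
congruence, i.e. `E ≡_c F` or `E →₁ ⋯ →₁ F' ≡_c F`. -/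
def Reduces (E F : ExtProg Φ) : Prop :=
  ∃ G : ExtProg Φ, Relation.ReflTransGen Step1 E G ∧ Congruent G F


/-! ## Semantics -/

section Semantics

variable {A : Type}

/-- An environment for the function variables: a partial function
`Aⁿ ⇀ A ⊕ Bool` for each function variable (`none` = divergence). -/
abbrev Env (A : Type) : Type := FV → List A → Option (A ⊕ Bool)

/-- A `Φ`-structure on the universe `A`: a partial interpretation of each
primitive (`Sum.inl` for sort `ind`, `Sum.inr` for sort `bool`). -/
abbrev Struc (Φ A : Type) : Type := Φ → List A → Option (A ⊕ Bool)

/-- An environment is sort- and arity-respecting. -/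
def GoodEnv (env : Env A) : Prop :=
  ∀ p : FV, ∀ as v, env p as = some v →
    as.length = p.2.1 ∧ (p.1 = Srt.ind → ∃ a, v = Sum.inl a) ∧
    (p.1 = Srt.bool → ∃ b, v = Sum.inr b)

/-- A structure is sort- and arity-respecting. -/
def GoodStruc (St : Struc Φ A) (arΦ : Φ → ℕ) (sΦ : Φ → Srt) : Prop :=
  ∀ φ as v, St φ as = some v →
    as.length = arΦ φ ∧ (sΦ φ = Srt.ind → ∃ a, v = Sum.inl a) ∧
    (sΦ φ = Srt.bool → ∃ b, v = Sum.inr b)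

/-- A structure is total (on arguments of the right arity). -/
def TotalStruc (St : Struc Φ A) (arΦ : Φ → ℕ) : Prop :=
  ∀ φ as, as.length = arΦ φ → (St φ as).isSome

mutual
/-- Kleene evaluation of terms: `none` means divergence; arguments of
applications are evaluated strictly and must be of sort `ind`; the conditional
evaluates its test first and then the selected branch. -/
def eval (St : Struc Φ A) (iv : ℕ → A) (env : Env A) : Term Φ → Option (A ⊕ Bool)
  | .tt => some (Sum.inr true)
  | .ff => some (Sum.inr false)
  | .ivar i => some (Sum.inl (iv i))
  | .fapp p args =>
      match evalArgs St iv env args with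
      | none => none
      | some as => env p as
  | .prim f args =>
      match evalArgs St iv env args with
      | none => none
      | some as => St f as
  | .cond _ a b c =>
      match eval St iv env a with
      | some (Sum.inr true) => eval St iv env b
      | some (Sum.inr false) => eval St iv env c
      | _ => none

def evalArgs (St : Struc Φ A) (iv : ℕ → A) (env : Env A) :
    List (Term Φ) → Option (List A)
  | [] => some []
  | t :: ts =>
      match eval St iv env t with
      | some (Sum.inl a) =>
          match evalArgs St iv env ts with
          | some as => some (a :: as)
          | none => none
      | _ => none
end

/-- Validity of the identity `E = F` in the structure: Kleene strong equality
under every assignment of individuals to the individual variables and of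
sort-respecting partial functions to the function variables. -/
def Valid (St : Struc Φ A) (E F : Term Φ) : Prop :=
  ∀ (iv : ℕ → A) (env : Env A), GoodEnv env → eval St iv env E = eval St iv env F

/-- An individual variable is *placed* in the identity
`φ(zs₁) = ψ(zs₂)` if it is one of the listed immediate arguments. -/
def Placed (zs₁ zs₂ : List (Term Φ)) (s : ℕ) : Prop := Term.ivar s ∈ zs₁ ++ zs₂

/-- Injective validity `A ⊨_inj φ(zs₁) = ψ(zs₂)`: validity under all
assignments which are injective on the placed individual variables. -/
def ValidInjId (St : Struc Φ A) (φ ψ : Φ) (zs₁ zs₂ : List (Term Φ)) : Prop :=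
  ∀ (iv : ℕ → A) (env : Env A), GoodEnv env →
    (∀ s t, Placed zs₁ zs₂ s → Placed zs₁ zs₂ t → iv s = iv t → s = t) →
    eval St iv env (.prim φ zs₁) = eval St iv env (.prim ψ zs₂)

/-- Bind the variables `xs` to the values `as` on top of the assignment `iv`. -/
def bindList (xs : List ℕ) (as : List A) (iv : ℕ → A) (i : ℕ) : A :=
  match xs.findIdx? (· = i) with
  | some k => as.getD k (iv i)
  | none => iv i

/-- `env` solves the system of recursive equations in the body of `E`. -/
def Solves (St : Struc Φ A) (iv : ℕ → A) (E : ExtProg Φ) (env : Env A) : Prop :=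
  ∀ e ∈ E.body, ∀ as : List A, as.length = e.xs.length →
    env e.p as = eval St (bindList e.xs as iv) env e.rhs

/-- The pointwise partial-function (information) ordering on environments. -/
def envLE (env env' : Env A) : Prop :=
  ∀ p as, env p as = none ∨ env p as = env' p as

/-- `Den St iv E w` : the denotation of the extended program `E` at the
assignment `iv` is `w`, computed by evaluating the head at the least solution
of the body. -/
def Den (St : Struc Φ A) (iv : ℕ → A) (E : ExtProg Φ) (w : Option (A ⊕ Bool)) : Prop :=
  ∃ env : Env A, Solves St iv E env ∧ (∀ env', Solves St iv E env' → envLE env env') ∧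
    eval St iv env E.head = w

/-! ## Recursors and intensions -/

/-- The renaming of individual variables matching the list `xs` with the list `ys`. -/
def bindRen (xs ys : List ℕ) (i : ℕ) : ℕ :=
  match xs.findIdx? (· = i) with
  | some k => ys.getD k i
  | none => i

/-- The parts of two irreducible programs define the same functional, modulo the
renaming `ρ` of the recursion variables and the matching of the bound individual
variables. -/
def EqnSemEq (St : Struc Φ A) (ρ : FV → FV) (e f : Eqn Φ) : Prop :=
  e.p = ρ f.p ∧ e.xs.length = f.xs.length ∧
  ∀ (iv : ℕ → A) (env : Env A), GoodEnv env →
    eval St iv env e.rhs = eval St iv env (renameV (bindRen f.xs e.xs) (renameF ρ f.rhs))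

/-- The recursors of `E` and `F` on the structure are equal (strongly
isomorphic): the bodies match up to a sort- and arity-preserving bijection of the
recursion variables, with the corresponding parts denoting the same functionals. -/
def RecEq (St : Struc Φ A) (E F : ExtProg Φ) : Prop :=
  ∃ ρ : FV → FV, Function.Bijective ρ ∧ SortArityPres ρ ∧
    (∀ (iv : ℕ → A) (env : Env A), GoodEnv env →
      eval St iv env E.head = eval St iv env (renameF ρ F.head)) ∧
    Multiset.Rel (EqnSemEq St ρ) E.body F.body

/-- Intensional equivalence on a structure: the referential intensions (the
recursors of the canonical forms) of the two programs are equal. -/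
def IntEqOn (St : Struc Φ A) (E F : ExtProg Φ) : Prop :=
  ∃ E' F' : ExtProg Φ, Reduces E E' ∧ IrrProg E' ∧ Reduces F F' ∧ IrrProg F' ∧
    RecEq St E' F'

end Semantics

/-- Global intensional equivalence: equal referential intensions in every
infinite `Φ`-structure. -/
def GlobalIntEq (E F : ExtProg Φ) : Prop :=
  ∀ (A : Type) (St : Struc Φ A), Infinite A → IntEqOn St E F

/-- A program is proper if none of its parts is an immediate term of Boolean sort. -/
def ProperProg (E : ExtProg Φ) : Prop :=
  ¬(isImmediate E.head = true ∧ immSort E.head = Srt.bool) ∧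
  ∀ e ∈ E.body, ¬(isImmediate e.rhs = true ∧ immSort e.rhs = Srt.bool)


/-! ## Pure algebraic terms (Statement 0) -/

/-- Pure algebraic terms: built only from individual variables and function
variables of sort `ind` (of the correct arities) by application. -/
inductive PureAlg : Term Φ → Prop where
  | ivar (i : ℕ) : PureAlg (.ivar i)
  | fapp (n i : ℕ) (args : List (Term Φ)) (hargs : ∀ t ∈ args, PureAlg t)
      (hlen : args.length = n) : PureAlg (.fapp (Srt.ind, n, i) args)

/-! ## Bare identities (Statements 14, 16) -/

/-- A term is an individual variable or a nullary function variable of sort `ind`. -/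
def BareVarT (t : Term Φ) : Prop :=
  (∃ i, t = Term.ivar i) ∨ (∃ i, t = Term.fapp (Srt.ind, 0, i) [])

/-- A bare variable: `(false, i)` codes the individual variable `v_i`,
`(true, i)` codes the nullary function variable `p^{ind,0}_i`. -/
abbrev BareVar : Type := Bool × ℕ

/-- Canonical choice of bare variables: each variable occurring for the first
time is the first unused variable of its kind in the fixed alternating list
`v₀, p₀, v₁, p₁, …`. -/
def CanonicalBare (xs : List BareVar) : Prop :=
  ∀ i x, xs[i]? = some x → (∀ j < i, xs[j]? ≠ some x) →
    x.2 = (((xs.take i).filter (fun y => y.1 == x.1)).dedup).length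

/-- The representative function of an equivalence relation `r` on the placed
variables: a placed variable is sent to the least element of its class. -/
noncomputable def repFun (placed : ℕ → Prop) (r : ℕ → ℕ → Prop) (s : ℕ) : ℕ :=
  open Classical in
  if placed s then sInf {j | r s j} else s

/-! ## Propositional programs coding graphs (Statement 19) -/

/-- The propositional variable `r`. -/
def rVar : FV := (Srt.bool, 0, 0)

/-- The propositional variable `p_i`. -/
def pVar (n : ℕ) (i : Fin n) : FV := (Srt.bool, 0, 1 + (i : ℕ))

/-- The propositional variable `p_{ij}`. -/
def pijVar (n : ℕ) (i j : Fin n) : FV := (Srt.bool, 0, 1 + n + ((i : ℕ) * n + (j : ℕ)))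

/-- The part `E_{ij}` of the program coding the graph `E`. -/
def edgeTerm (n : ℕ) (E : Fin n → Fin n → Bool) (i j : Fin n) : Term Empty :=
  if E i j then
    .cond Srt.bool (.fapp (pVar n i) []) (.fapp (pVar n j) []) (.fapp rVar [])
  else
    .cond Srt.bool (.fapp (pVar n i) []) (.fapp rVar []) (.fapp (pVar n j) [])

/-- The irreducible propositional program `prog(E)` coding the graph `E`:
`true where { p_i = p_i : i < n } ∪ { p_{ij} = E_{ij} : i,j < n } ∪ { r = false }`. -/
def graphProg (n : ℕ) (E : Fin n → Fin n → Bool) : ExtProg Empty where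
  fvars := []
  head := .tt
  body :=
    (Finset.univ.val.map (fun i : Fin n => (⟨pVar n i, [], .fapp (pVar n i) []⟩ : Eqn Empty)))
    + ((Finset.univ.val (α := Fin n × Fin n)).map
        (fun ij => (⟨pijVar n ij.1 ij.2, [], edgeTerm n E ij.1 ij.2⟩ : Eqn Empty)))
    + {⟨rVar, [], .ff⟩}

/-!
The bare identity, evaluated under an assignment, agrees with the original one evaluated under
an assignment that interprets each function variable `p` by sending the argument values of an
occurring term `p(v⃗)` to the value of its bare replacement. This is well defined once the
individual variables are assigned injectively, which is possible without changing the placed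
ones because `A` is infinite. Conversely, the original identity agrees with the bare one when
each replacement variable is interpreted by the value of the term it replaces.
-/

section Bare

lemma exists_eq_map_ivar {bs : List (Term Φ)} (h : bs.all isIvar = true) :
    ∃ ks : List ℕ, bs = ks.map Term.ivar := by
  induction bs with
  | nil => exact ⟨[], rfl⟩
  | cons b bs ih =>
    simp only [List.all_cons, Bool.and_eq_true] at h
    obtain ⟨ks, rfl⟩ := ih h.2
    cases b with
    | ivar k => exact ⟨k :: ks, rfl⟩
    | _ => simp [isIvar] at h

lemma isImmediate_ind_cases {t : Term Φ} (h : isImmediate t = true) (hs : immSort t = .ind) :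
    (∃ k, t = .ivar k) ∨ ∃ (n m : ℕ) (ks : List ℕ), t = .fapp (.ind, n, m) (ks.map .ivar) := by
  cases t with
  | ivar k => exact .inl ⟨k, rfl⟩
  | fapp p args =>
    obtain ⟨s, n, m⟩ := p
    simp only [immSort] at hs
    simp only [isImmediate, Bool.and_eq_true] at h
    obtain ⟨ks, rfl⟩ := exists_eq_map_ivar h.1
    exact .inr ⟨n, m, ks, by rw [hs]⟩
  | _ => simp [isImmediate] at h

lemma getElem?_sInf_eq_some {α : Type*} {l : List α} {a : α} (ha : a ∈ l) :
    l[sInf {j : ℕ | l[j]? = some a}]? = some a :=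
  Nat.sInf_mem (List.mem_iff_getElem?.mp ha)

lemma getElem?_map_eq_getElem?_map_iff {α β : Type*} {f : α → β} {l : List α}
    (hf : Set.InjOn f {a | a ∈ l}) (i j : ℕ) :
    (l.map f)[i]? = (l.map f)[j]? ↔ l[i]? = l[j]? := by
  simp only [List.getElem?_map]
  refine ⟨fun h => ?_, fun h => by rw [h]⟩
  cases hi : l[i]? <;> cases hj : l[j]? <;> simp only [hi, hj, Option.map_none, Option.map_some,
    reduceCtorEq, Option.some.injEq] at h ⊢
  exact hf (List.mem_of_getElem? hi) (List.mem_of_getElem? hj) h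

/-- Individual variables are kept; every other term, nullary function variables included,
becomes `p^{ind,0}_i` with `i` its first position in `l`. This makes the renaming injective
on `l` with no freshness bookkeeping. -/
noncomputable def assocBare (l : List (Term Φ)) (t : Term Φ) : Term Φ :=
  match t with
  | .ivar k => .ivar k
  | _ => .fapp (.ind, 0, sInf {j : ℕ | l[j]? = some t}) []

lemma assocBare_cases (l : List (Term Φ)) (t : Term Φ) :
    (∃ k, t = .ivar k ∧ assocBare l t = .ivar k) ∨
      ((∀ k, t ≠ .ivar k) ∧
        assocBare l t = .fapp (.ind, 0, sInf {j : ℕ | l[j]? = some t}) []) := by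
  cases t <;> simp [assocBare]

lemma bareVarT_assocBare (l : List (Term Φ)) (t : Term Φ) : BareVarT (assocBare l t) := by
  rcases assocBare_cases l t with ⟨k, -, h⟩ | ⟨-, h⟩
  · exact .inl ⟨k, h⟩
  · exact .inr ⟨_, h⟩

lemma isImmediate_assocBare (l : List (Term Φ)) (t : Term Φ) :
    isImmediate (assocBare l t) = true := by
  rcases assocBare_cases l t with ⟨k, -, h⟩ | ⟨-, h⟩ <;> simp [h, isImmediate]

lemma immSort_assocBare (l : List (Term Φ)) (t : Term Φ) : immSort (assocBare l t) = .ind := by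
  rcases assocBare_cases l t with ⟨k, -, h⟩ | ⟨-, h⟩ <;> simp [h, immSort]

lemma assocBare_eq_ivar_iff {l : List (Term Φ)} {t : Term Φ} {k : ℕ} :
    assocBare l t = .ivar k ↔ t = .ivar k := by
  rcases assocBare_cases l t with ⟨k', rfl, h⟩ | ⟨hne, h⟩
  · simp [h]
  · simp [h, hne]

lemma assocBare_injOn (l : List (Term Φ)) : Set.InjOn (assocBare l) {t | t ∈ l} := by
  intro t ht t' ht' h
  rcases assocBare_cases l t with ⟨k, rfl, hk⟩ | ⟨hne, hx⟩
  · exact (assocBare_eq_ivar_iff.mp (h.symm.trans hk)).symm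
  rcases assocBare_cases l t' with ⟨k', rfl, hk'⟩ | ⟨-, hx'⟩
  · exact absurd (assocBare_eq_ivar_iff.mp (h.trans hk')) (hne k')
  rw [hx, hx'] at h
  have hidx : sInf {j : ℕ | l[j]? = some t} = sInf {j : ℕ | l[j]? = some t'} := by
    injection h with h; simpa using h
  simpa [hidx, getElem?_sInf_eq_some ht'] using (getElem?_sInf_eq_some ht).symm

lemma placed_map_assocBare_iff (l zs₁ zs₂ : List (Term Φ)) (s : ℕ) :
    Placed (zs₁.map (assocBare l)) (zs₂.map (assocBare l)) s ↔ Placed zs₁ zs₂ s := by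
  simp only [Placed, ← List.map_append, List.mem_map, assocBare_eq_ivar_iff, exists_eq_right]

end Bare

lemma exists_injective_eqOn {α A : Type*} [Countable α] [Infinite A] {f : α → A} {S : Set α}
    (hS : S.Finite) (hf : S.InjOn f) : ∃ g : α → A, g.Injective ∧ S.EqOn g f := by
  classical
  obtain ⟨c, hc⟩ := Countable.exists_injective_nat α
  let e := ((hS.image f).infinite_compl).natEmbedding
  refine ⟨fun a => if a ∈ S then f a else e (c a), fun a b hab => ?_, fun a ha => if_pos ha⟩
  have hfresh : ∀ a b, b ∈ S → (e (c a) : A) ≠ f b := fun a b hb h => (e (c a)).2 ⟨b, hb, h.symm⟩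
  by_cases ha : a ∈ S <;> by_cases hb : b ∈ S <;> simp only [ha, hb, if_true, if_false] at hab
  · exact hf ha hb hab
  · exact absurd hab.symm (hfresh b a ha)
  · exact absurd hab (hfresh a b hb)
  · exact hc (e.injective (Subtype.ext hab))

section Eval

variable {A : Type} (St : Struc Φ A)

lemma evalArgs_map_ivar (iv : ℕ → A) (env : Env A) (ks : List ℕ) :
    evalArgs St iv env (ks.map .ivar) = some (ks.map iv) := by
  induction ks with
  | nil => rfl
  | cons k ks ih => simp [evalArgs, eval, ih]

lemma eval_fapp_map_ivar (iv : ℕ → A) (env : Env A) (p : FV) (ks : List ℕ) :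
    eval St iv env (.fapp p (ks.map .ivar)) = env p (ks.map iv) := by
  rw [eval, evalArgs_map_ivar]

lemma evalArgs_map {iv iv' : ℕ → A} {env env' : Env A} {f : Term Φ → Term Φ} {ts : List (Term Φ)}
    (h : ∀ t ∈ ts, eval St iv env t = eval St iv' env' (f t)) :
    evalArgs St iv env ts = evalArgs St iv' env' (ts.map f) := by
  induction ts with
  | nil => rfl
  | cons t ts ih =>
    rw [List.map_cons, evalArgs, evalArgs, h t List.mem_cons_self,
      ih fun u hu => h u (List.mem_cons_of_mem _ hu)]

lemma eval_prim_map {iv iv' : ℕ → A} {env env' : Env A} {f : Term Φ → Term Φ} (φ : Φ)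
    {ts : List (Term Φ)} (h : ∀ t ∈ ts, eval St iv env t = eval St iv' env' (f t)) :
    eval St iv env (.prim φ ts) = eval St iv' env' (.prim φ (ts.map f)) := by
  rw [eval, eval, evalArgs_map St h]

lemma eval_eq_some_inl {iv : ℕ → A} {env : Env A} (henv : GoodEnv env) {t : Term Φ}
    (ht : isImmediate t = true) (hs : immSort t = .ind) {v : A ⊕ Bool}
    (hv : eval St iv env t = some v) : ∃ a, v = .inl a := by
  rcases isImmediate_ind_cases ht hs with ⟨k, rfl⟩ | ⟨n, m, ks, rfl⟩
  · exact ⟨iv k, (Option.some.inj hv).symm⟩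
  · rw [eval_fapp_map_ivar] at hv
    exact (henv _ _ _ hv).2.1 rfl

end Eval

section Transfer

variable {A : Type} (St : Struc Φ A) {l : List (Term Φ)}

lemma exists_goodEnv_eval_assocBare (hl : ∀ t ∈ l, isImmediate t = true ∧ immSort t = .ind)
    (iv : ℕ → A) {env : Env A} (henv : GoodEnv env) :
    ∃ env' : Env A, GoodEnv env' ∧
      ∀ t ∈ l, eval St iv env' (assocBare l t) = eval St iv env t := by
  classical
  refine ⟨fun p as => if p.1 = .ind ∧ p.2.1 = 0 ∧ as = [] then l[p.2.2]?.bind (eval St iv env)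
    else none, ?_, ?_⟩
  · intro p as v hv
    dsimp only at hv
    split_ifs at hv with hp
    obtain ⟨hs, hn, rfl⟩ := hp
    obtain ⟨t, ht, htv⟩ := Option.bind_eq_some_iff.mp hv
    obtain ⟨himm, hind⟩ := hl t (List.mem_of_getElem? ht)
    exact ⟨hn.symm, fun _ => eval_eq_some_inl St henv himm hind htv, fun h => by simp [hs] at h⟩
  · intro t ht
    rcases assocBare_cases l t with ⟨k, rfl, h⟩ | ⟨-, h⟩
    · rw [h]; rfl
    · simp [h, eval, evalArgs, getElem?_sInf_eq_some ht]

lemma exists_goodEnv_eval_eq_eval_assocBare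
    (hl : ∀ t ∈ l, isImmediate t = true ∧ immSort t = .ind) {iv' : ℕ → A} (hiv' : iv'.Injective)
    {iv : ℕ → A} (hagree : ∀ k, Term.ivar k ∈ l → iv' k = iv k) {env : Env A}
    (henv : GoodEnv env) :
    ∃ env' : Env A, GoodEnv env' ∧
      ∀ t ∈ l, eval St iv' env' t = eval St iv env (assocBare l t) := by
  classical
  let term (p : FV) (as : List A) : Term Φ := .fapp p (as.map (Term.ivar ∘ Function.invFun iv'))
  refine ⟨fun p as => if term p as ∈ l then eval St iv env (assocBare l (term p as)) else none,
    ?_, ?_⟩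
  · intro p as v hv
    dsimp only at hv
    split_ifs at hv with hmem
    obtain ⟨himm, hs⟩ := hl _ hmem
    simp only [term, isImmediate, Bool.and_eq_true, beq_iff_eq, List.length_map] at himm
    refine ⟨himm.2, fun _ => eval_eq_some_inl St henv (isImmediate_assocBare l _)
      (immSort_assocBare l _) hv, fun h => by simp [term, immSort, h] at hs⟩
  · intro t ht
    rcases isImmediate_ind_cases (hl t ht).1 (hl t ht).2 with ⟨k, rfl⟩ | ⟨n, m, ks, rfl⟩
    · simp [eval, assocBare, hagree k ht]
    · have hterm : term (.ind, n, m) (ks.map iv') = .fapp (.ind, n, m) (ks.map .ivar) := by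
        simp [term, Function.comp_def, Function.leftInverse_invFun hiv' _]
      rw [eval_fapp_map_ivar]
      simp only [hterm, if_pos ht]

end Transfer

section ValidInjId

variable {A : Type} {St : Struc Φ A} {φ ψ : Φ} {zs₁ zs₂ : List (Term Φ)}

lemma ValidInjId.map_assocBare [Infinite A]
    (hz : ∀ z ∈ zs₁ ++ zs₂, isImmediate z = true ∧ immSort z = .ind)
    (hV : ValidInjId St φ ψ zs₁ zs₂) :
    ValidInjId St φ ψ (zs₁.map (assocBare (zs₁ ++ zs₂))) (zs₂.map (assocBare (zs₁ ++ zs₂))) := by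
  intro iv env henv hinj
  simp only [placed_map_assocBare_iff] at hinj
  have hfin : {k | Placed zs₁ zs₂ k}.Finite :=
    (List.finite_toSet _).preimage fun _ _ _ _ h => Term.ivar.inj h
  obtain ⟨iv', hiv', hagree⟩ := exists_injective_eqOn hfin fun s hs t ht => hinj s t hs ht
  obtain ⟨env', henv', heval⟩ :=
    exists_goodEnv_eval_eq_eval_assocBare St hz hiv' (fun k hk => hagree hk) henv
  rw [← eval_prim_map St φ fun t ht => heval t (List.mem_append_left _ ht),
    ← eval_prim_map St ψ fun t ht => heval t (List.mem_append_right _ ht)]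
  exact hV iv' env' henv' fun s t _ _ h => hiv' h

lemma ValidInjId.of_map_assocBare
    (hz : ∀ z ∈ zs₁ ++ zs₂, isImmediate z = true ∧ immSort z = .ind)
    (hV : ValidInjId St φ ψ (zs₁.map (assocBare (zs₁ ++ zs₂)))
      (zs₂.map (assocBare (zs₁ ++ zs₂)))) :
    ValidInjId St φ ψ zs₁ zs₂ := by
  intro iv env henv hinj
  obtain ⟨env', henv', heval⟩ := exists_goodEnv_eval_assocBare St hz iv henv
  rw [eval_prim_map St φ fun t ht => (heval t (List.mem_append_left _ ht)).symm,
    eval_prim_map St ψ fun t ht => (heval t (List.mem_append_right _ ht)).symm]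
  exact hV iv env' henv' (by simpa only [placed_map_assocBare_iff] using hinj)

end ValidInjId

/-- With every irreducible identity `φ(z₁,…,z_k) = ψ(z_{k+1},…,z_l)`
one can associate a sequence of individual and nullary function variables of sort
`ind` with the same identity pattern as the `zᵢ`, such that for every infinite
`Φ`-structure the original identity is injectively valid iff the associated bare
identity is. -/
theorem statement14 {Φ : Type} (arΦ : Φ → ℕ) (sΦ : Φ → Srt) (φ ψ : Φ)
    (zs₁ zs₂ : List (Term Φ))
    (hz : ∀ z ∈ zs₁ ++ zs₂, isImmediate z = true ∧ immSort z = Srt.ind)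
    (hl₁ : zs₁.length = arΦ φ) (hl₂ : zs₂.length = arΦ ψ) :
    ∃ xs₁ xs₂ : List (Term Φ),
      xs₁.length = zs₁.length ∧ xs₂.length = zs₂.length ∧
      (∀ x ∈ xs₁ ++ xs₂, BareVarT x) ∧
      (∀ i j : ℕ, (xs₁ ++ xs₂)[i]? = (xs₁ ++ xs₂)[j]? ↔
        (zs₁ ++ zs₂)[i]? = (zs₁ ++ zs₂)[j]?) ∧
      ∀ (A : Type) (St : Struc Φ A), Infinite A → GoodStruc St arΦ sΦ →
        (ValidInjId St φ ψ zs₁ zs₂ ↔ ValidInjId St φ ψ xs₁ xs₂) := by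
  refine ⟨zs₁.map (assocBare (zs₁ ++ zs₂)), zs₂.map (assocBare (zs₁ ++ zs₂)),
    List.length_map _, List.length_map _, ?_, ?_, ?_⟩
  · simp only [← List.map_append, List.mem_map]
    rintro _ ⟨t, -, rfl⟩
    exact bareVarT_assocBare _ t
  · rw [← List.map_append]
    exact getElem?_map_eq_getElem?_map_iff (assocBare_injOn _)
  · intro A St _ _
    exact ⟨ValidInjId.map_assocBare hz, ValidInjId.of_map_assocBare hz⟩

end McCarthy
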